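/- Let H_m (m ≥ 4) be the 4-graph on Z/m × (Z/2)⁶ defined in Section 7. If A is an independent set of vertices in H_m, then |A| ≤ 2m + Σ_{i∈Z/m} χ[A₁(i) ≠ ∅]. In particular, α(H_m) ≤ 3m, and removing all vertices at any level i∈Z/m decreases this bound by 1 per level removed. -/

import Mathlib

open Finset

abbrev G2 := ZMod 2 × ZMod 2

/-- Vertices of the 4-graph `H_m`: elements `(i, x, y, z)` of `ℤ/m ⊕ (ℤ/2)⁶`. -/
abbrev HVtx (m : ℕ) := ZMod m × G2 × G2 × G2

/-- Edge predicate of the 4-graph `H_m` on `ℤ/m ⊕ (ℤ/2)⁶` (edge types 1, 2, 3,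
4a, 4b, 4c of Section 7). -/
def IsHmEdge {m : ℕ} (e : Finset (HVtx m)) : Prop :=
  e.card = 4 ∧ (
  -- type 1
  (∃ (i : ZMod m) (x y : G2) (z₁ z₂ z₃ z₄ : G2),
     e = {(i, x, y, z₁), (i, x, y, z₂), (i, x, y, z₃), (i, x, y, z₄)}) ∨
  -- type 2
  (∃ (i : ZMod m) (x₁ y₁ z₁ x₂ y₂ z₂ x₃ y₃ z₃ x₄ y₄ z₄ : G2),
     x₁ + x₂ + x₃ + x₄ = 0 ∧
     (x₁, y₁) ≠ (x₂, y₂) ∧ (x₁, y₁) ≠ (x₃, y₃) ∧ (x₁, y₁) ≠ (x₄, y₄) ∧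
     (x₂, y₂) ≠ (x₃, y₃) ∧ (x₂, y₂) ≠ (x₄, y₄) ∧ (x₃, y₃) ≠ (x₄, y₄) ∧
     e = {(i, x₁, y₁, z₁), (i, x₂, y₂, z₂), (i, x₃, y₃, z₃), (i, x₄, y₄, z₄)}) ∨
  -- type 3
  (∃ (i : ZMod m) (x₁ y₁' z₁' y₁'' z₁'' x₂' y₂' z₂' x₂'' y₂'' z₂'' : G2),
     y₁' ≠ y₁'' ∧ y₁' + y₁'' + x₂' + x₂'' = 0 ∧
     e = {(i, x₁, y₁', z₁'), (i, x₁, y₁'', z₁''),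
          (i + 1, x₂', y₂', z₂'), (i + 1, x₂'', y₂'', z₂'')}) ∨
  -- type 4a
  (∃ (i : ZMod m) (x₁ y₁ z₁' z₁'' x₂ y₂ z₂' z₂'' : G2),
     z₁' ≠ z₁'' ∧ z₂' ≠ z₂'' ∧ (x₁, y₁) ≠ (x₂, y₂) ∧
     e = {(i, x₁, y₁, z₁'), (i, x₁, y₁, z₁''),
          (i, x₂, y₂, z₂'), (i, x₂, y₂, z₂'')}) ∨
  -- type 4b
  (∃ (i : ZMod m) (x₁ y₁ z₁' z₁'' x₂ y₂' z₂' y₂'' z₂'' : G2),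
     z₁' ≠ z₁'' ∧ y₂' ≠ y₂'' ∧
     e = {(i, x₁, y₁, z₁'), (i, x₁, y₁, z₁''),
          (i + 2, x₂, y₂', z₂'), (i + 2, x₂, y₂'', z₂'')}) ∨
  -- type 4c
  (∃ (i : ZMod m) (x₁ y₁ z₁' z₁'' x₂' y₂' z₂' x₂'' y₂'' z₂'' : G2),
     z₁' ≠ z₁'' ∧ z₁' + z₁'' + x₂' + x₂'' = 0 ∧
     e = {(i, x₁, y₁, z₁'), (i, x₁, y₁, z₁''),
          (i + 3, x₂', y₂', z₂'), (i + 3, x₂'', y₂'', z₂'')}))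

/-- `A₃(i,x,y) = { z : (i,x,y,z) ∈ A }`. -/
def A3 {m : ℕ} (A : Finset (HVtx m)) (i : ZMod m) (x y : G2) : Finset G2 :=
  Finset.univ.filter fun z => (i, x, y, z) ∈ A

/-- `A₂(i,x) = { y : ∃ z, (i,x,y,z) ∈ A }`. -/
def A2 {m : ℕ} (A : Finset (HVtx m)) (i : ZMod m) (x : G2) : Finset G2 :=
  Finset.univ.filter fun y => ∃ z, (i, x, y, z) ∈ A

/-- `A₁(i) = { x : ∃ y z, (i,x,y,z) ∈ A }`. -/
def A1 {m : ℕ} (A : Finset (HVtx m)) (i : ZMod m) : Finset G2 :=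
  Finset.univ.filter fun x => (Finset.univ.filter fun y : G2 => (A3 A i x y).Nonempty).Nonempty

/-- `εᵢ(A) = ∑_{x,y} max{0, |A₃(i,x,y)| - 1}` (note `t - 1 = max{0, t-1}` in `ℕ`). -/
def epsi {m : ℕ} (A : Finset (HVtx m)) (i : ZMod m) : ℕ :=
  ∑ x : G2, ∑ y : G2, ((A3 A i x y).card - 1)

/-! Every vertex set satisfies
`|A| = ∑ᵢ (|A₁(i)| + ∑ₓ (|A₂(i,x)| - 1) + εᵢ(A))`, since `t = min 1 t + (t - 1)`.
In an independent set, edges of types 2 and 4a allow at most one `x` with `|A₂(i,x)| ≥ 2` and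
at most one `(x,y)` with `|A₃(i,x,y)| ≥ 2`, so the last two terms are bounded by the excesses
`e₂(i) = max |A₂(i,·)| - 1` and `e₃(i) = max |A₃(i,·,·)| - 1`. With `e₁(i) = |A₁(i)| - 1`,
edges of types 3, 4b and 4c force `e₂(i+2) + e₁(i+3) + e₃(i) ≤ 2`, and summing this window
inequality over the cyclic group `ℤ/m` gives `|A| ≤ 2m + #{i | A₁(i) ≠ ∅}`. -/

lemma Finset.sum_card_eq_card_filter_nonempty_add {ι α : Type*} (s : Finset ι)
    (f : ι → Finset α) :
    ∑ x ∈ s, #(f x) = #{x ∈ s | (f x).Nonempty} + ∑ x ∈ s, (#(f x) - 1) := by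
  rw [card_filter, ← sum_add_distrib]
  refine sum_congr rfl fun x _ => ?_
  split_ifs with h
  · have := h.card_pos
    omega
  · simp [not_nonempty_iff_eq_empty.mp h]

lemma Finset.sum_tsub_one_le_sup_tsub_one {ι : Type*} {s : Finset ι} {f : ι → ℕ}
    (h : ∀ x ∈ s, ∀ y ∈ s, 2 ≤ f x → 2 ≤ f y → x = y) :
    ∑ x ∈ s, (f x - 1) ≤ s.sup f - 1 := by
  by_cases hheavy : ∃ x ∈ s, 2 ≤ f x
  · obtain ⟨x, hx, hfx⟩ := hheavy
    rw [sum_eq_single_of_mem x hx fun y hy hyx => ?_]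
    · exact Nat.sub_le_sub_right (le_sup hx) 1
    · have := mt (h x hx y hy hfx) (Ne.symm hyx)
      omega
  · push Not at hheavy
    rw [sum_eq_zero fun x hx => by have := hheavy x hx; omega]
    exact Nat.zero_le _

lemma Finset.sum_add_add_le_of_shift {G : Type*} [AddGroup G] [Fintype G] (a b : G)
    {f g h : G → ℕ} {c : ℕ} (hw : ∀ i, f (i + a) + g (i + b) + h i ≤ c) :
    ∑ i, (f i + g i + h i) ≤ Fintype.card G * c := by
  rw [sum_add_distrib, sum_add_distrib, ← Equiv.sum_comp (Equiv.addRight a) f,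
    ← Equiv.sum_comp (Equiv.addRight b) g, ← sum_add_distrib, ← sum_add_distrib]
  simpa using sum_le_sum fun i (_ : i ∈ univ) => hw i

lemma G2.add_self : ∀ a : G2, a + a = 0 := by decide

lemma G2.add_ne_zero_of_ne : ∀ a b : G2, a ≠ b → a + b ≠ 0 := by decide

lemma G2.exists_ne_add_eq : ∀ d : G2, d ≠ 0 → ∀ T : Finset G2, 3 ≤ #T →
    ∃ a ∈ T, ∃ b ∈ T, a ≠ b ∧ a + b = d := by decide

lemma G2.exists_pairs_add_eq {T P : Finset G2} (hT : 2 ≤ #T) (hP : 2 ≤ #P)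
    (h : 5 ≤ #T + #P) :
    ∃ a ∈ T, ∃ b ∈ T, a ≠ b ∧ ∃ p ∈ P, ∃ q ∈ P, p ≠ q ∧ a + b = p + q := by
  rcases le_or_gt 3 #T with hT3 | hP3
  · obtain ⟨p, hp, q, hq, hpq⟩ := one_lt_card.mp hP
    obtain ⟨a, ha, b, hb, hab, hsum⟩ :=
      G2.exists_ne_add_eq _ (G2.add_ne_zero_of_ne p q hpq) T hT3
    exact ⟨a, ha, b, hb, hab, p, hp, q, hq, hpq, hsum⟩
  · obtain ⟨a, ha, b, hb, hab⟩ := one_lt_card.mp hT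
    obtain ⟨p, hp, q, hq, hpq, hsum⟩ :=
      G2.exists_ne_add_eq _ (G2.add_ne_zero_of_ne a b hab) P (by omega)
    exact ⟨a, ha, b, hb, hab, p, hp, q, hq, hpq, hsum.symm⟩

lemma G2.mem_of_three_lt_card {T : Finset G2} (h : 3 < #T) (a : G2) : a ∈ T :=
  eq_univ_of_card T (le_antisymm (card_le_univ T) (by simp; omega)) ▸ mem_univ a

lemma ZMod.self_ne_add_natCast {m k : ℕ} (hk : 0 < k) (hkm : k < m) (i : ZMod m) :
    i ≠ i + k := by
  rw [Ne, left_eq_add, ZMod.natCast_eq_zero_iff]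
  exact Nat.not_dvd_of_pos_of_lt hk hkm

section Hm

variable {m : ℕ} {A : Finset (HVtx m)}

def IsHmIndependent (A : Finset (HVtx m)) : Prop :=
  ∀ e : Finset (HVtx m), IsHmEdge e → ¬ e ⊆ A

lemma IsHmIndependent.not_isHmEdge (hA : IsHmIndependent A) {a b c d : HVtx m}
    (ha : a ∈ A) (hb : b ∈ A) (hc : c ∈ A) (hd : d ∈ A) : ¬ IsHmEdge {a, b, c, d} :=
  fun he => hA _ he (by simp [insert_subset_iff, *])

@[simp] lemma mem_A3 {i : ZMod m} {x y z : G2} : z ∈ A3 A i x y ↔ (i, x, y, z) ∈ A := by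
  simp [A3]

@[simp] lemma mem_A2 {i : ZMod m} {x y : G2} : y ∈ A2 A i x ↔ ∃ z, (i, x, y, z) ∈ A := by
  simp [A2]

lemma A2_eq_filter_nonempty (A : Finset (HVtx m)) (i : ZMod m) (x : G2) :
    A2 A i x = univ.filter fun y => (A3 A i x y).Nonempty := by
  ext y
  simp [Finset.Nonempty]

lemma A1_eq_filter_nonempty (A : Finset (HVtx m)) (i : ZMod m) :
    A1 A i = univ.filter fun x => (A2 A i x).Nonempty := by
  simp only [A1, A2_eq_filter_nonempty]

lemma mem_A1 {i : ZMod m} {x : G2} : x ∈ A1 A i ↔ ∃ y z, (i, x, y, z) ∈ A := by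
  rw [A1_eq_filter_nonempty, mem_filter_univ]
  simp only [Finset.Nonempty, mem_A2]

lemma IsHmIndependent.card_A3_le_three (hA : IsHmIndependent A) (i : ZMod m) (x y : G2) :
    #(A3 A i x y) ≤ 3 := by
  by_contra! h
  have hz (z : G2) : (i, x, y, z) ∈ A := mem_A3.mp (G2.mem_of_three_lt_card h z)
  refine hA.not_isHmEdge (hz (0, 0)) (hz (0, 1)) (hz (1, 0)) (hz (1, 1))
    ⟨card_eq_four.mpr ⟨_, _, _, _, ?_, ?_, ?_, ?_, ?_, ?_, rfl⟩,
      Or.inl ⟨i, x, y, _, _, _, _, rfl⟩⟩ <;> simp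

lemma IsHmIndependent.card_A2_le_three (hA : IsHmIndependent A) (i : ZMod m) (x : G2) :
    #(A2 A i x) ≤ 3 := by
  by_contra! h
  have hy (y : G2) : ∃ z, (i, x, y, z) ∈ A := mem_A2.mp (G2.mem_of_three_lt_card h y)
  obtain ⟨z₁, h₁⟩ := hy (0, 0)
  obtain ⟨z₂, h₂⟩ := hy (0, 1)
  obtain ⟨z₃, h₃⟩ := hy (1, 0)
  obtain ⟨z₄, h₄⟩ := hy (1, 1)
  refine hA.not_isHmEdge h₁ h₂ h₃ h₄
    ⟨card_eq_four.mpr ⟨_, _, _, _, ?_, ?_, ?_, ?_, ?_, ?_, rfl⟩,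
      Or.inr <| Or.inl ⟨i, x, _, z₁, x, _, z₂, x, _, z₃, x, _, z₄,
        by rw [G2.add_self, zero_add, G2.add_self], ?_, ?_, ?_, ?_, ?_, ?_, rfl⟩⟩ <;> simp

lemma IsHmIndependent.card_A1_le_three (hA : IsHmIndependent A) (i : ZMod m) :
    #(A1 A i) ≤ 3 := by
  by_contra! h
  have hx (x : G2) : ∃ y z, (i, x, y, z) ∈ A := mem_A1.mp (G2.mem_of_three_lt_card h x)
  obtain ⟨y₁, z₁, h₁⟩ := hx (0, 0)
  obtain ⟨y₂, z₂, h₂⟩ := hx (0, 1)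
  obtain ⟨y₃, z₃, h₃⟩ := hx (1, 0)
  obtain ⟨y₄, z₄, h₄⟩ := hx (1, 1)
  refine hA.not_isHmEdge h₁ h₂ h₃ h₄
    ⟨card_eq_four.mpr ⟨_, _, _, _, ?_, ?_, ?_, ?_, ?_, ?_, rfl⟩,
      Or.inr <| Or.inl ⟨i, _, y₁, z₁, _, y₂, z₂, _, y₃, z₃, _, y₄, z₄,
        by decide, ?_, ?_, ?_, ?_, ?_, ?_, rfl⟩⟩ <;> simp

lemma IsHmIndependent.eq_of_two_le_card_A2 (hA : IsHmIndependent A) (i : ZMod m) {x x' : G2}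
    (h : 2 ≤ #(A2 A i x)) (h' : 2 ≤ #(A2 A i x')) : x = x' := by
  by_contra hxx
  obtain ⟨ya, hya, yb, hyb, hab⟩ := one_lt_card.mp h
  obtain ⟨yc, hyc, yd, hyd, hcd⟩ := one_lt_card.mp h'
  obtain ⟨za, ha⟩ := mem_A2.mp hya
  obtain ⟨zb, hb⟩ := mem_A2.mp hyb
  obtain ⟨zc, hc⟩ := mem_A2.mp hyc
  obtain ⟨zd, hd⟩ := mem_A2.mp hyd
  refine hA.not_isHmEdge ha hb hc hd
    ⟨card_eq_four.mpr ⟨_, _, _, _, ?_, ?_, ?_, ?_, ?_, ?_, rfl⟩,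
      Or.inr <| Or.inl ⟨i, x, ya, za, x, yb, zb, x', yc, zc, x', yd, zd,
        by rw [G2.add_self, zero_add, G2.add_self], ?_, ?_, ?_, ?_, ?_, ?_, rfl⟩⟩ <;> simp [*]

lemma IsHmIndependent.eq_of_two_le_card_A3 (hA : IsHmIndependent A) (i : ZMod m)
    {p p' : G2 × G2} (h : 2 ≤ #(A3 A i p.1 p.2)) (h' : 2 ≤ #(A3 A i p'.1 p'.2)) : p = p' := by
  obtain ⟨x, y⟩ := p
  obtain ⟨x', y'⟩ := p'
  by_contra hpp
  obtain ⟨za, hza, zb, hzb, hab⟩ := one_lt_card.mp h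
  obtain ⟨zc, hzc, zd, hzd, hcd⟩ := one_lt_card.mp h'
  refine hA.not_isHmEdge (mem_A3.mp hza) (mem_A3.mp hzb) (mem_A3.mp hzc) (mem_A3.mp hzd)
    ⟨card_eq_four.mpr ⟨_, _, _, _, ?_, ?_, ?_, ?_, ?_, ?_, rfl⟩,
      Or.inr <| Or.inr <| Or.inr <| Or.inl ⟨i, x, y, za, zb, x', y', zc, zd,
        hab, hcd, hpp, rfl⟩⟩ <;> grind

lemma IsHmIndependent.card_A2_add_card_A1_add_one_le (hA : IsHmIndependent A) (hm : 1 < m)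
    (i : ZMod m) (x : G2) (h₂ : 2 ≤ #(A2 A i x)) (h₁ : 2 ≤ #(A1 A (i + 1))) :
    #(A2 A i x) + #(A1 A (i + 1)) ≤ 4 := by
  by_contra! h
  obtain ⟨ya, hya, yb, hyb, hab, p, hp, q, hq, hpq, hsum⟩ := G2.exists_pairs_add_eq h₂ h₁ h
  obtain ⟨za, ha⟩ := mem_A2.mp hya
  obtain ⟨zb, hb⟩ := mem_A2.mp hyb
  obtain ⟨yc, zc, hc⟩ := mem_A1.mp hp
  obtain ⟨yd, zd, hd⟩ := mem_A1.mp hq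
  have hi : i ≠ i + 1 := by exact_mod_cast ZMod.self_ne_add_natCast one_pos hm i
  refine hA.not_isHmEdge ha hb hc hd
    ⟨card_eq_four.mpr ⟨_, _, _, _, ?_, ?_, ?_, ?_, ?_, ?_, rfl⟩,
      Or.inr <| Or.inr <| Or.inl ⟨i, x, ya, za, yb, zb, p, yc, zc, q, yd, zd,
        hab, by rw [add_assoc, hsum, G2.add_self], rfl⟩⟩ <;> simp [*]

lemma IsHmIndependent.card_A2_add_two_le_one (hA : IsHmIndependent A) (hm : 2 < m)
    (i : ZMod m) {x y : G2} (h : 2 ≤ #(A3 A i x y)) (x' : G2) : #(A2 A (i + 2) x') ≤ 1 := by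
  by_contra! h'
  obtain ⟨za, hza, zb, hzb, hab⟩ := one_lt_card.mp h
  obtain ⟨yc, hyc, yd, hyd, hcd⟩ := one_lt_card.mp h'
  obtain ⟨zc, hc⟩ := mem_A2.mp hyc
  obtain ⟨zd, hd⟩ := mem_A2.mp hyd
  have hi : i ≠ i + 2 := by exact_mod_cast ZMod.self_ne_add_natCast two_pos hm i
  refine hA.not_isHmEdge (mem_A3.mp hza) (mem_A3.mp hzb) hc hd
    ⟨card_eq_four.mpr ⟨_, _, _, _, ?_, ?_, ?_, ?_, ?_, ?_, rfl⟩,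
      Or.inr <| Or.inr <| Or.inr <| Or.inr <| Or.inl ⟨i, x, y, za, zb, x', yc, zc, yd, zd,
        hab, hcd, rfl⟩⟩ <;> simp [*]

lemma IsHmIndependent.card_A3_add_card_A1_add_three_le (hA : IsHmIndependent A) (hm : 3 < m)
    (i : ZMod m) (x y : G2) (h₃ : 2 ≤ #(A3 A i x y)) (h₁ : 2 ≤ #(A1 A (i + 3))) :
    #(A3 A i x y) + #(A1 A (i + 3)) ≤ 4 := by
  by_contra! h
  obtain ⟨za, hza, zb, hzb, hab, p, hp, q, hq, hpq, hsum⟩ := G2.exists_pairs_add_eq h₃ h₁ h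
  obtain ⟨yc, zc, hc⟩ := mem_A1.mp hp
  obtain ⟨yd, zd, hd⟩ := mem_A1.mp hq
  have hi : i ≠ i + 3 := by exact_mod_cast ZMod.self_ne_add_natCast three_pos hm i
  refine hA.not_isHmEdge (mem_A3.mp hza) (mem_A3.mp hzb) hc hd
    ⟨card_eq_four.mpr ⟨_, _, _, _, ?_, ?_, ?_, ?_, ?_, ?_, rfl⟩,
      Or.inr <| Or.inr <| Or.inr <| Or.inr <| Or.inr ⟨i, x, y, za, zb, p, yc, zc, q, yd, zd,
        hab, by rw [add_assoc, hsum, G2.add_self], rfl⟩⟩ <;> simp [*]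

def excess1 (A : Finset (HVtx m)) (i : ZMod m) : ℕ := #(A1 A i) - 1

def excess2 (A : Finset (HVtx m)) (i : ZMod m) : ℕ := (univ.sup fun x => #(A2 A i x)) - 1

def excess3 (A : Finset (HVtx m)) (i : ZMod m) : ℕ :=
  (univ.sup fun p : G2 × G2 => #(A3 A i p.1 p.2)) - 1

lemma IsHmIndependent.excess2_add_excess1_add_one_le (hA : IsHmIndependent A) (hm : 1 < m)
    (i : ZMod m) : excess2 A i + excess1 A (i + 1) ≤ 2 := by
  obtain ⟨x, -, hx⟩ := exists_mem_eq_sup univ univ_nonempty fun x => #(A2 A i x)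
  have h₂ := hA.card_A2_le_three i x
  have h₁ := hA.card_A1_le_three (i + 1)
  have h := hA.card_A2_add_card_A1_add_one_le hm i x
  simp only [excess1, excess2, hx]
  omega

lemma IsHmIndependent.excess_window (hA : IsHmIndependent A) (hm : 3 < m) (i : ZMod m) :
    excess2 A (i + 2) + excess1 A (i + 3) + excess3 A i ≤ 2 := by
  obtain ⟨⟨x, y⟩, -, hxy⟩ := exists_mem_eq_sup univ univ_nonempty
    fun p : G2 × G2 => #(A3 A i p.1 p.2)
  dsimp only at hxy
  by_cases hheavy : 2 ≤ #(A3 A i x y)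
  · have h₂ : excess2 A (i + 2) = 0 := by
      have := Finset.sup_le fun x' (_ : x' ∈ univ) =>
        hA.card_A2_add_two_le_one (by omega) i hheavy x'
      rw [excess2]
      omega
    have h₃ := hA.card_A3_le_three i x y
    have h₁ := hA.card_A1_le_three (i + 3)
    have h := hA.card_A3_add_card_A1_add_three_le hm i x y hheavy
    simp only [excess1, excess3, h₂, hxy]
    omega
  · have h₃ : excess3 A i = 0 := by
      rw [excess3, hxy]
      omega
    have h := hA.excess2_add_excess1_add_one_le (by omega) (i + 2)
    rw [add_assoc, show (2 : ZMod m) + 1 = 3 by norm_num] at h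
    omega

lemma IsHmIndependent.sum_card_A2_tsub_one_le (hA : IsHmIndependent A) (i : ZMod m) :
    ∑ x, (#(A2 A i x) - 1) ≤ excess2 A i :=
  sum_tsub_one_le_sup_tsub_one fun _ _ _ _ => hA.eq_of_two_le_card_A2 i

lemma IsHmIndependent.epsi_le (hA : IsHmIndependent A) (i : ZMod m) :
    epsi A i ≤ excess3 A i := by
  rw [epsi, ← Fintype.sum_prod_type']
  exact sum_tsub_one_le_sup_tsub_one fun _ _ _ _ => hA.eq_of_two_le_card_A3 i

lemma card_A1_eq_ite_add_excess1 (A : Finset (HVtx m)) (i : ZMod m) :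
    #(A1 A i) = (if (A1 A i).Nonempty then 1 else 0) + excess1 A i := by
  rw [excess1]
  split_ifs with h
  · have := h.card_pos
    omega
  · simp [not_nonempty_iff_eq_empty.mp h]

variable [NeZero m]

lemma card_eq_sum_card_A3 (A : Finset (HVtx m)) : #A = ∑ i, ∑ x, ∑ y, #(A3 A i x y) := by
  simp only [A3, card_filter, ← Fintype.sum_prod_type']
  rw [← card_filter, filter_univ_mem]

lemma card_eq_sum_levels (A : Finset (HVtx m)) :
    #A = ∑ i, (#(A1 A i) + ∑ x, (#(A2 A i x) - 1) + epsi A i) := by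
  rw [card_eq_sum_card_A3]
  refine sum_congr rfl fun i _ => ?_
  simp only [sum_card_eq_card_filter_nonempty_add, sum_add_distrib, epsi,
    ← A2_eq_filter_nonempty, ← A1_eq_filter_nonempty]

lemma sum_ite_A1_nonempty_add_card_le (A : Finset (HVtx m)) {S : Finset (ZMod m)}
    (hS : ∀ i ∈ S, ∀ v ∈ A, v.1 ≠ i) :
    ∑ i, (if (A1 A i).Nonempty then 1 else 0) + #S ≤ m := by
  have hdisj : Disjoint (univ.filter fun i => (A1 A i).Nonempty) S := by
    refine disjoint_left.mpr fun i hi hiS => ?_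
    obtain ⟨x, hx⟩ := (mem_filter_univ i).mp hi
    obtain ⟨y, z, hv⟩ := mem_A1.mp hx
    exact hS i hiS _ hv rfl
  rw [sum_boole, Nat.cast_id, ← card_union_of_disjoint hdisj]
  simpa using card_le_univ ((univ.filter fun i => (A1 A i).Nonempty) ∪ S)

end Hm

theorem stmt_15 (m : ℕ) [NeZero m] (hm : 4 ≤ m)
    (A : Finset (HVtx m))
    (hA : ∀ e : Finset (HVtx m), IsHmEdge e → ¬ e ⊆ A) :
    A.card ≤ 2 * m + ∑ i : ZMod m, (if (A1 A i).Nonempty then 1 else 0) ∧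
    A.card ≤ 3 * m ∧
    ∀ S : Finset (ZMod m), (∀ i ∈ S, ∀ v ∈ A, v.1 ≠ i) →
      A.card + S.card ≤ 3 * m := by
  replace hA : IsHmIndependent A := hA
  have hmain : #A ≤ 2 * m + ∑ i : ZMod m, (if (A1 A i).Nonempty then 1 else 0) :=
    calc #A = ∑ i, (#(A1 A i) + ∑ x, (#(A2 A i x) - 1) + epsi A i) := card_eq_sum_levels A
      _ ≤ ∑ i, ((if (A1 A i).Nonempty then 1 else 0) +
            (excess2 A i + excess1 A i + excess3 A i)) := sum_le_sum fun i _ => by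
          have := hA.sum_card_A2_tsub_one_le i
          have := hA.epsi_le i
          rw [card_A1_eq_ite_add_excess1]
          omega
      _ ≤ ∑ i : ZMod m, (if (A1 A i).Nonempty then 1 else 0) + Fintype.card (ZMod m) * 2 := by
          rw [sum_add_distrib]
          exact Nat.add_le_add_left (sum_add_add_le_of_shift 2 3 (hA.excess_window hm)) _
      _ = _ := by rw [ZMod.card]; ring
  refine ⟨hmain, ?_, fun S hS => ?_⟩
  · have := sum_ite_A1_nonempty_add_card_le A (S := ∅) (by simp)
    rw [card_empty, add_zero] at this
    omega
  · have := sum_ite_A1_nonempty_add_card_le A hS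
    omega
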